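/- For all a, b > 0 with a ≠ b, H(a,b)^(5/12) · C(a,b)^(7/12) < M(a,b) < C(a,b), and these bounds are sharp: H^α C^(1-α) < M for all a ≠ b iff α ≥ 5/12, and M < H^β C^(1-β) for all a ≠ b iff β ≤ 0. -/

import Mathlib

/-!
With `a + b = 2 s` and `t = |a - b| / (a + b) ∈ (0, 1)` one has `H = s (1 - t²)`, `C = s (1 + t²)`
and `M = s · t / arsinh t`, so everything is a comparison of `t / arsinh t` with
`geomHC α t = (1 - t²)^α (1 + t²)^(1 - α)`, which is antitone in `α`.

For `α = 5/12`, `logGap t = 12 log ((t / arsinh t) / geomHC (5/12) t)` tends to `0` as `t → 0⁺`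
and has positive derivative: after `arsinh t ≥ t - t³/6` and `√(1 + t²) ≥ 1 + t²/2 - t⁴/8` this is a
polynomial inequality. Sharpness: as `t → 0`, `t / arsinh t = 1 + t²/6 + O(t⁴)` while
`geomHC α t = 1 + (1 - 2α) t² + O(t⁴)`, which is larger when `α < 5/12` (made effective by
Bernoulli's inequality); as `t → 1⁻`, `geomHC β t → 0` for `β > 0`.
-/

noncomputable def M (a b : ℝ) : ℝ := (a - b) / (2 * Real.arsinh ((a - b) / (a + b)))
noncomputable def H (a b : ℝ) : ℝ := 2 * a * b / (a + b)
noncomputable def C (a b : ℝ) : ℝ := (a ^ 2 + b ^ 2) / (a + b)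

open Real Set Filter Topology

lemma one_add_sub_le_sqrt_one_add {u : ℝ} (hu0 : 0 ≤ u) (hu : u ≤ 8) :
    1 + u / 2 - u ^ 2 / 8 ≤ √(1 + u) := by
  rcases le_total (1 + u / 2 - u ^ 2 / 8) 0 with h | h
  · exact h.trans (sqrt_nonneg _)
  · rw [le_sqrt h (by linarith)]
    nlinarith [pow_nonneg hu0 3]

lemma sub_cube_div_six_le_arsinh {x : ℝ} (hx : 0 ≤ x) : x - x ^ 3 / 6 ≤ arsinh x := by
  have hderiv (y : ℝ) : HasDerivAt (fun x => arsinh x - (x - x ^ 3 / 6))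
      ((√(1 + y ^ 2))⁻¹ - (1 - y ^ 2 / 2)) y := by
    refine ((hasDerivAt_arsinh y).sub ((hasDerivAt_id' y).sub
      ((hasDerivAt_pow 3 y).div_const 6))).congr_deriv ?_
    norm_num
    ring
  have hmono : Monotone (fun x => arsinh x - (x - x ^ 3 / 6)) := by
    refine monotone_of_deriv_nonneg (fun y => (hderiv y).differentiableAt) fun y => ?_
    rw [(hderiv y).deriv, sub_nonneg]
    calc 1 - y ^ 2 / 2 ≤ (1 + y ^ 2 / 2)⁻¹ := by
          rw [← one_div, le_div_iff₀ (by positivity)]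
          nlinarith [sq_nonneg (y ^ 2)]
      _ ≤ (√(1 + y ^ 2))⁻¹ :=
          inv_anti₀ (by positivity) (sqrt_one_add_le (by nlinarith [sq_nonneg y]))
  simpa using hmono hx

lemma div_arsinh_le {x : ℝ} (hx : 0 < x) (hx6 : x ^ 2 < 6) :
    x / arsinh x ≤ 6 / (6 - x ^ 2) := by
  rw [div_le_div_iff₀ (arsinh_pos_iff.2 hx) (by linarith)]
  nlinarith [sub_cube_div_six_le_arsinh hx.le]

lemma mul_one_sub_lt_arsinh_mul_sqrt {y : ℝ} (hy0 : 0 < y) (hy1 : y < 1) :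
    12 * y * (1 - y ^ 4) < arsinh y * √(1 + y ^ 2) * (12 - 4 * y ^ 2 + 12 * y ^ 4) := by
  have harsinh := sub_cube_div_six_le_arsinh hy0.le
  have hsqrt := one_add_sub_le_sqrt_one_add (sq_nonneg y) (by nlinarith)
  have hy2 : y ^ 2 < 1 := by nlinarith
  calc 12 * y * (1 - y ^ 4)
      < (y - y ^ 3 / 6) * (1 + y ^ 2 / 2 - (y ^ 2) ^ 2 / 8) * (12 - 4 * y ^ 2 + 12 * y ^ 4) := by
        nlinarith [pow_pos hy0 5, pow_pos hy0 7, pow_pos hy0 9, pow_pos hy0 11,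
          mul_pos (pow_pos hy0 7) (sub_pos.2 hy2)]
    _ ≤ arsinh y * √(1 + y ^ 2) * (12 - 4 * y ^ 2 + 12 * y ^ 4) := by
        gcongr
        · nlinarith [pow_pos hy0 3]
        · nlinarith
        · nlinarith

lemma div_one_add_mul_le_rpow_one_add {y p : ℝ} (hy : -1 < y) (hp0 : 0 ≤ p) (hp1 : p ≤ 1) :
    (1 + y) / (1 + (1 - p) * y) ≤ (1 + y) ^ p := by
  have hy' : 0 < 1 + y := by linarith
  rw [div_le_iff₀ (by rcases le_total y 0 with h | h <;> nlinarith)]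
  calc 1 + y = (1 + y) ^ p * (1 + y) ^ (1 - p) := by
        rw [← rpow_add hy', add_sub_cancel, rpow_one]
    _ ≤ (1 + y) ^ p * (1 + (1 - p) * y) := by
        gcongr
        exact rpow_one_add_le_one_add_mul_self hy.le (by linarith) (by linarith)

lemma StrictMonoOn.lt_of_tendsto_nhdsGT {α β : Type*} [LinearOrder α] [TopologicalSpace α]
    [OrderTopology α] [DenselyOrdered α] [Preorder β] [TopologicalSpace β] [ClosedIicTopology β]
    {f : α → β} {a b x : α} {c : β} (hf : StrictMonoOn f (Ioo a b))
    (hc : Tendsto f (𝓝[>] a) (𝓝 c)) (hx : x ∈ Ioo a b) : c < f x := by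
  obtain ⟨y, hay, hyx⟩ := exists_between hx.1
  have hy : y ∈ Ioo a b := ⟨hay, hyx.trans hx.2⟩
  have : (𝓝[>] a).NeBot := nhdsGT_neBot_of_exists_gt ⟨y, hay⟩
  have hcy : c ≤ f y := by
    refine le_of_tendsto hc ?_
    filter_upwards [Ioo_mem_nhdsGT hay] with z hz
    exact (hf ⟨hz.1, hz.2.trans hy.2⟩ hy hz.2).le
  exact hcy.trans_lt (hf hy hx hyx)

noncomputable def logGap (x : ℝ) : ℝ :=
  12 * (log x - log (arsinh x)) - 5 * log (1 - x ^ 2) - 7 * log (1 + x ^ 2)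

lemma hasDerivAt_logGap {x : ℝ} (hx0 : 0 < x) (hx1 : x < 1) :
    HasDerivAt logGap
      ((12 - 4 * x ^ 2 + 12 * x ^ 4) / (x * (1 - x ^ 4)) - 12 / (arsinh x * √(1 + x ^ 2))) x := by
  have hA : 0 < arsinh x := arsinh_pos_iff.2 hx0
  have hm : 0 < 1 - x ^ 2 := by nlinarith
  have hp : 0 < 1 + x ^ 2 := by positivity
  have h1 := (hasDerivAt_log hx0.ne').sub ((hasDerivAt_arsinh x).log hA.ne')
  have h2 := ((hasDerivAt_pow 2 x).const_sub 1).log hm.ne'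
  have h3 := ((hasDerivAt_pow 2 x).const_add 1).log hp.ne'
  refine (((h1.const_mul 12).sub (h2.const_mul 5)).sub (h3.const_mul 7)).congr_deriv ?_
  have : 1 - x ^ 4 = (1 - x ^ 2) * (1 + x ^ 2) := by ring
  rw [this]
  field_simp
  ring

lemma strictMonoOn_logGap : StrictMonoOn logGap (Ioo 0 1) := by
  refine strictMonoOn_of_deriv_pos (convex_Ioo 0 1)
    (fun x hx => (hasDerivAt_logGap hx.1 hx.2).continuousAt.continuousWithinAt) fun x hx => ?_
  rw [interior_Ioo] at hx
  obtain ⟨hx0, hx1⟩ := hx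
  have hA : 0 < arsinh x := arsinh_pos_iff.2 hx0
  have hx4 : 0 < 1 - x ^ 4 := by nlinarith [pow_lt_one₀ hx0.le hx1 (n := 4) (by norm_num)]
  rw [(hasDerivAt_logGap hx0 hx1).deriv, sub_pos, div_lt_div_iff₀ (by positivity) (by positivity)]
  nlinarith [mul_one_sub_lt_arsinh_mul_sqrt hx0 hx1]

lemma tendsto_div_arsinh_nhdsNE_zero : Tendsto (fun x => x / arsinh x) (𝓝[≠] 0) (𝓝 1) := by
  have h := hasDerivAt_iff_tendsto_slope.1 (hasDerivAt_arsinh 0)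
  simp only [slope_fun_def_field, arsinh_zero, sub_zero] at h
  norm_num at h
  simpa using h.inv₀ one_ne_zero

lemma tendsto_logGap_nhdsGT_zero : Tendsto logGap (𝓝[>] 0) (𝓝 0) := by
  have hratio : Tendsto (fun x => 12 * log (x / arsinh x)) (𝓝[>] 0) (𝓝 0) := by
    have h := ((tendsto_div_arsinh_nhdsNE_zero.mono_left
      (nhdsWithin_mono 0 fun x (hx : 0 < x) => hx.ne')).log one_ne_zero).const_mul 12
    rwa [log_one, mul_zero] at h
  have hsq : Tendsto (fun x : ℝ => 5 * log (1 - x ^ 2) + 7 * log (1 + x ^ 2)) (𝓝[>] 0) (𝓝 0) := by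
    have : ContinuousAt (fun x : ℝ => 5 * log (1 - x ^ 2) + 7 * log (1 + x ^ 2)) 0 := by
      fun_prop (disch := norm_num)
    simpa using this.tendsto.mono_left nhdsWithin_le_nhds
  have h := hratio.sub hsq
  rw [sub_zero] at h
  refine h.congr' ?_
  filter_upwards [self_mem_nhdsWithin] with x hx
  rw [logGap, log_div (ne_of_gt hx) (arsinh_pos_iff.2 hx).ne']
  ring

lemma logGap_pos {x : ℝ} (hx0 : 0 < x) (hx1 : x < 1) : 0 < logGap x :=
  strictMonoOn_logGap.lt_of_tendsto_nhdsGT tendsto_logGap_nhdsGT_zero ⟨hx0, hx1⟩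

noncomputable def geomHC (α t : ℝ) : ℝ := (1 - t ^ 2) ^ α * (1 + t ^ 2) ^ (1 - α)

lemma geomHC_eq_mul_rpow (α : ℝ) {t : ℝ} (ht : t ^ 2 < 1) :
    geomHC α t = (1 + t ^ 2) * ((1 - t ^ 2) / (1 + t ^ 2)) ^ α := by
  have hm : 0 < 1 - t ^ 2 := by linarith
  have hp : 0 < 1 + t ^ 2 := by positivity
  rw [geomHC, div_rpow hm.le hp.le, rpow_sub hp, rpow_one]
  field_simp

lemma antitone_geomHC {t : ℝ} (ht : t ^ 2 < 1) : Antitone fun α => geomHC α t := by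
  intro p q hpq
  have hm : 0 < 1 - t ^ 2 := by linarith
  have hp : 0 < 1 + t ^ 2 := by positivity
  simp only [geomHC_eq_mul_rpow _ ht]
  gcongr ?_ * ?_
  exact rpow_le_rpow_of_exponent_ge (div_pos hm hp)
    ((div_le_one hp).2 (by linarith [sq_nonneg t])) hpq

lemma geomHC_zero (t : ℝ) : geomHC 0 t = 1 + t ^ 2 := by simp [geomHC]

lemma geomHC_five_twelfths_lt {t : ℝ} (ht0 : 0 < t) (ht1 : t < 1) :
    geomHC (5 / 12) t < t / arsinh t := by
  have hm : 0 < 1 - t ^ 2 := by nlinarith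
  have hA : 0 < arsinh t := arsinh_pos_iff.2 ht0
  have hgap := logGap_pos ht0 ht1
  rw [geomHC, ← log_lt_log_iff (by positivity) (by positivity), log_mul (by positivity)
    (by positivity), log_rpow hm, log_rpow (by positivity), log_div ht0.ne' hA.ne']
  rw [logGap] at hgap
  linarith

lemma geomHC_lt_div_arsinh {α t : ℝ} (hα : 5 / 12 ≤ α) (ht0 : 0 < t) (ht1 : t < 1) :
    geomHC α t < t / arsinh t :=
  (antitone_geomHC (by nlinarith) hα).trans_lt (geomHC_five_twelfths_lt ht0 ht1)

lemma div_arsinh_lt_geomHC {β t : ℝ} (hβ : β ≤ 0) (ht0 : 0 < t) (ht1 : t < 1) :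
    t / arsinh t < geomHC β t := by
  have ht2 : t ^ 2 < 1 := by nlinarith
  calc t / arsinh t ≤ 6 / (6 - t ^ 2) := div_arsinh_le ht0 (by linarith)
    _ < 1 + t ^ 2 := by
        rw [div_lt_iff₀ (by linarith)]
        nlinarith [pow_pos ht0 2]
    _ = geomHC 0 t := (geomHC_zero t).symm
    _ ≤ geomHC β t := antitone_geomHC ht2 hβ

lemma exists_div_arsinh_le_geomHC_of_nonneg {α : ℝ} (hα0 : 0 ≤ α) (hα : α < 5 / 12) :
    ∃ t ∈ Ioo (0 : ℝ) 1, t / arsinh t ≤ geomHC α t := by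
  set u : ℝ := min (5 / 12 - α) (1 / 2)
  have hu0 : 0 < u := lt_min (by linarith) (by norm_num)
  have hu1 : u ≤ 1 / 2 := min_le_right _ _
  have huα : u ≤ 5 / 12 - α := min_le_left _ _
  have ht0 : 0 < √u := sqrt_pos.2 hu0
  have ht2 : √u ^ 2 = u := sq_sqrt hu0.le
  refine ⟨√u, ⟨ht0, (sqrt_lt' one_pos).2 (by linarith)⟩, ?_⟩
  have hminus : (1 - u) / (1 - (1 - α) * u) ≤ (1 - u) ^ α := by
    simpa only [← sub_eq_add_neg, mul_neg] using
      div_one_add_mul_le_rpow_one_add (y := -u) (by linarith) hα0 (by linarith)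
  have hplus : (1 + u) / (1 + α * u) ≤ (1 + u) ^ (1 - α) := by
    simpa only [sub_sub_cancel] using
      div_one_add_mul_le_rpow_one_add (y := u) (p := 1 - α) (by linarith) (by linarith)
        (by linarith)
  have hd1 : 0 < 1 - (1 - α) * u := by nlinarith
  have hd2 : 0 < 1 + α * u := by positivity
  calc √u / arsinh √u ≤ 6 / (6 - u) := by
        simpa only [ht2] using div_arsinh_le ht0 (by linarith)
    _ ≤ (1 - u) / (1 - (1 - α) * u) * ((1 + u) / (1 + α * u)) := by
        rw [div_mul_div_comm, div_le_div_iff₀ (by linarith) (mul_pos hd1 hd2)]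
        have hα1 : 0 ≤ 1 - α := by linarith
        have hgap : 0 ≤ 5 / 12 - α - u := by linarith
        nlinarith [mul_nonneg (pow_nonneg hu0.le 2) (mul_nonneg hα0 hα1),
          mul_nonneg hgap hu0.le, pow_pos hu0 3]
    _ ≤ geomHC α √u := by
        rw [geomHC, ht2]
        exact mul_le_mul hminus hplus (div_nonneg (by linarith) hd2.le)
          (rpow_nonneg (by linarith) _)

lemma exists_div_arsinh_le_geomHC {α : ℝ} (hα : α < 5 / 12) :
    ∃ t ∈ Ioo (0 : ℝ) 1, t / arsinh t ≤ geomHC α t := by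
  obtain ⟨t, ht, hle⟩ := exists_div_arsinh_le_geomHC_of_nonneg (le_max_right α 0)
    (max_lt hα (by norm_num))
  exact ⟨t, ht, hle.trans (antitone_geomHC (by nlinarith [ht.1, ht.2]) (le_max_left α 0))⟩

lemma exists_geomHC_le_div_arsinh {β : ℝ} (hβ : 0 < β) :
    ∃ t ∈ Ioo (0 : ℝ) 1, geomHC β t ≤ t / arsinh t := by
  have hgeom : Tendsto (geomHC β) (𝓝 1) (𝓝 0) := by
    have : ContinuousAt (geomHC β) 1 :=
      ((continuousAt_const.sub (continuousAt_id.pow 2)).rpow_const (Or.inr hβ.le)).mul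
        ((continuousAt_const.add (continuousAt_id.pow 2)).rpow_const (Or.inl (by norm_num)))
    simpa [geomHC, zero_rpow hβ.ne'] using this.tendsto
  have hratio : Tendsto (fun t => t / arsinh t) (𝓝 1) (𝓝 (1 / arsinh 1)) :=
    (continuousAt_id.div continuous_arsinh.continuousAt
      (arsinh_pos_iff.2 one_pos).ne').tendsto
  obtain ⟨t, hlt, ht⟩ := (((hgeom.eventually_lt hratio
    (by positivity [arsinh_pos_iff.2 one_pos])).filter_mono nhdsWithin_le_nhds).and
    (Ioo_mem_nhdsLT one_pos)).exists
  exact ⟨t, ht, hlt.le⟩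

lemma abs_div_arsinh_abs (x : ℝ) : |x| / arsinh |x| = x / arsinh x := by
  rcases abs_cases x with ⟨h, -⟩ | ⟨h, -⟩ <;> simp [h, arsinh_neg, neg_div_neg_eq]

lemma exists_H_C_M_eq_mul {a b : ℝ} (ha : 0 < a) (hb : 0 < b) (hab : a ≠ b) :
    ∃ s t, 0 < s ∧ 0 < t ∧ t < 1 ∧ H a b = s * (1 - t ^ 2) ∧ C a b = s * (1 + t ^ 2) ∧
      M a b = s * (t / arsinh t) := by
  have hsum : 0 < a + b := add_pos ha hb
  have hx : (a - b) / (a + b) ≠ 0 := div_ne_zero (sub_ne_zero.2 hab) hsum.ne'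
  have hA : arsinh ((a - b) / (a + b)) ≠ 0 := by rwa [Ne, arsinh_eq_zero_iff]
  refine ⟨(a + b) / 2, |(a - b) / (a + b)|, by positivity, abs_pos.2 hx, ?_, ?_, ?_, ?_⟩
  · rw [abs_div, abs_of_pos hsum, div_lt_one hsum, abs_sub_lt_iff]
    constructor <;> linarith
  · rw [sq_abs, H]
    field_simp
    ring
  · rw [sq_abs, C]
    field_simp
    ring
  · rw [abs_div_arsinh_abs, M]
    field_simp

lemma mul_rpow_mul_mul_rpow_one_sub {s p q : ℝ} (hs : 0 < s) (hp : 0 ≤ p) (hq : 0 ≤ q) (α : ℝ) :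
    (s * p) ^ α * (s * q) ^ (1 - α) = s * (p ^ α * q ^ (1 - α)) := by
  rw [mul_rpow hs.le hp, mul_rpow hs.le hq,
    show s ^ α * p ^ α * (s ^ (1 - α) * q ^ (1 - α)) = s ^ α * s ^ (1 - α) * (p ^ α * q ^ (1 - α))
      by ring, ← rpow_add hs, add_sub_cancel, rpow_one]

lemma H_rpow_mul_C_rpow_lt_M {α a b : ℝ} (hα : 5 / 12 ≤ α) (ha : 0 < a) (hb : 0 < b)
    (hab : a ≠ b) : H a b ^ α * C a b ^ (1 - α) < M a b := by
  obtain ⟨s, t, hs, ht0, ht1, hH, hC, hM⟩ := exists_H_C_M_eq_mul ha hb hab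
  rw [hH, hC, hM, mul_rpow_mul_mul_rpow_one_sub hs (by nlinarith) (by positivity)]
  exact mul_lt_mul_of_pos_left (geomHC_lt_div_arsinh hα ht0 ht1) hs

lemma M_lt_H_rpow_mul_C_rpow {β a b : ℝ} (hβ : β ≤ 0) (ha : 0 < a) (hb : 0 < b)
    (hab : a ≠ b) : M a b < H a b ^ β * C a b ^ (1 - β) := by
  obtain ⟨s, t, hs, ht0, ht1, hH, hC, hM⟩ := exists_H_C_M_eq_mul ha hb hab
  rw [hH, hC, hM, mul_rpow_mul_mul_rpow_one_sub hs (by nlinarith) (by positivity)]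
  exact mul_lt_mul_of_pos_left (div_arsinh_lt_geomHC hβ ht0 ht1) hs

lemma H_one_add_one_sub (t : ℝ) : H (1 + t) (1 - t) = 1 - t ^ 2 := by
  rw [H]; ring

lemma C_one_add_one_sub (t : ℝ) : C (1 + t) (1 - t) = 1 + t ^ 2 := by
  rw [C]; ring

lemma M_one_add_one_sub (t : ℝ) : M (1 + t) (1 - t) = t / arsinh t := by
  rw [M, show 1 + t - (1 - t) = 2 * t by ring, show 1 + t + (1 - t) = 2 by ring,
    mul_div_cancel_left₀ t two_ne_zero, mul_div_mul_left t _ two_ne_zero]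

lemma exists_M_le_H_rpow_mul_C_rpow {α : ℝ} (hα : α < 5 / 12) :
    ∃ a b, 0 < a ∧ 0 < b ∧ a ≠ b ∧ M a b ≤ H a b ^ α * C a b ^ (1 - α) := by
  obtain ⟨t, ⟨ht0, ht1⟩, hle⟩ := exists_div_arsinh_le_geomHC hα
  refine ⟨1 + t, 1 - t, by linarith, by linarith, by intro h; linarith, ?_⟩
  rwa [H_one_add_one_sub, C_one_add_one_sub, M_one_add_one_sub]

lemma exists_H_rpow_mul_C_rpow_le_M {β : ℝ} (hβ : 0 < β) :
    ∃ a b, 0 < a ∧ 0 < b ∧ a ≠ b ∧ H a b ^ β * C a b ^ (1 - β) ≤ M a b := by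
  obtain ⟨t, ⟨ht0, ht1⟩, hle⟩ := exists_geomHC_le_div_arsinh hβ
  refine ⟨1 + t, 1 - t, by linarith, by linarith, by intro h; linarith, ?_⟩
  rwa [H_one_add_one_sub, C_one_add_one_sub, M_one_add_one_sub]

theorem stmt3 :
    (∀ a b : ℝ, 0 < a → 0 < b → a ≠ b →
      H a b ^ ((5 : ℝ) / 12) * C a b ^ ((7 : ℝ) / 12) < M a b ∧ M a b < C a b) ∧
    (∀ α : ℝ, (∀ a b : ℝ, 0 < a → 0 < b → a ≠ b →
      H a b ^ α * C a b ^ (1 - α) < M a b) ↔ 5 / 12 ≤ α) ∧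
    (∀ β : ℝ, (∀ a b : ℝ, 0 < a → 0 < b → a ≠ b →
      M a b < H a b ^ β * C a b ^ (1 - β)) ↔ β ≤ 0) := by
  refine ⟨fun a b ha hb hab => ⟨?_, ?_⟩, fun α => ⟨fun h => ?_, fun hα a b =>
    H_rpow_mul_C_rpow_lt_M hα⟩, fun β => ⟨fun h => ?_, fun hβ a b => M_lt_H_rpow_mul_C_rpow hβ⟩⟩
  · convert H_rpow_mul_C_rpow_lt_M (α := 5 / 12) le_rfl ha hb hab using 3
    norm_num
  · simpa using M_lt_H_rpow_mul_C_rpow le_rfl ha hb hab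
  · by_contra! hα
    obtain ⟨a, b, ha, hb, hab, hle⟩ := exists_M_le_H_rpow_mul_C_rpow hα
    exact (h a b ha hb hab).not_ge hle
  · by_contra! hβ
    obtain ⟨a, b, ha, hb, hab, hle⟩ := exists_H_rpow_mul_C_rpow_le_M hβ
    exact (h a b ha hb hab).not_ge hle
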